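/- arXiv:1511.08757 — 3 statements merged into one kernel-verified Lean document; each statement's English description precedes it below -/
import Mathlib

section
/- Suppose J is of exponential type with parameters A, B, C_1 > 0 and -n < γ < 0, i.e. A‖x‖_p^γ e^{-C_1‖x‖_p} ≤ J(‖x‖_p) ≤ B‖x‖_p^γ e^{-C_1‖x‖_p} for all x, and suppose the identity 1 - Ĵ(‖ξ‖_p) = ‖ξ‖_p^{-n} J(p‖ξ‖_p^{-1}) + p^n ‖ξ‖_p^{-n} ∑_{l≥0} p^{nl} J(p^{1+l}‖ξ‖_p^{-1}) holds. Then there exist positive constants B_1, B_2 such that for all ξ ≠ 0: 1 - Ĵ(‖ξ‖_p) ≤ B_1 ‖ξ‖_p^{-n-γ} e^{-C_1 p ‖ξ‖_p^{-1}} + B_2 ‖ξ‖_p^{-γ} e^{-C_1 p ‖ξ‖_p^{-1}}. -/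
private lemma exp_neg_le_fac_div {t : ℝ} (ht : 0 < t) (k : ℕ) :
    Real.exp (-t) ≤ (k.factorial : ℝ) / t ^ k := by
  have h := Real.pow_div_factorial_le_exp t ht.le k
  have hk : (0:ℝ) < (k.factorial : ℝ) := by positivity
  have htk : (0:ℝ) < t ^ k := by positivity
  have h1 : t ^ k ≤ Real.exp t * (k.factorial : ℝ) := (div_le_iff₀ hk).mp h
  have h2 : Real.exp (-t) * Real.exp t = 1 := by rw [← Real.exp_add]; simp
  rw [le_div_iff₀ htk]
  calc Real.exp (-t) * t ^ k
      ≤ Real.exp (-t) * (Real.exp t * (k.factorial : ℝ)) :=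
        mul_le_mul_of_nonneg_left h1 (Real.exp_nonneg _)
    _ = (k.factorial : ℝ) := by rw [← mul_assoc, h2, one_mul]

private lemma key_bound (n : ℕ) {x σ : ℝ} (hx : 2 ≤ x) (hσ : 0 < σ) (l : ℕ) :
    x ^ (n * l) * Real.exp (-(σ * x ^ l)) ≤
      Real.exp (-σ) * (1 + (n.factorial : ℝ) * x ^ n / σ ^ n) := by
  have hx0 : (0:ℝ) < x := by linarith
  have hfac : (0:ℝ) < (n.factorial : ℝ) := by positivity
  cases l with
  | zero =>
      have : (0:ℝ) ≤ (n.factorial : ℝ) * x ^ n / σ ^ n := by positivity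
      simp only [Nat.mul_zero, pow_zero, one_mul, mul_one]
      nlinarith [Real.exp_pos (-σ)]
  | succ k =>
      have hxk : (0:ℝ) < x ^ k := pow_pos hx0 k
      have hxk1 : (1:ℝ) ≤ x ^ k := one_le_pow₀ (by linarith)
      have h1' : x ^ k + 1 ≤ x ^ (k+1) := by
        have hps : x ^ (k+1) = x ^ k * x := pow_succ x k
        nlinarith [mul_le_mul_of_nonneg_left (by linarith : (1:ℝ) ≤ x - 1) hxk.le]
      have h1 : σ * x ^ k + σ ≤ σ * x ^ (k+1) := by
        have := mul_le_mul_of_nonneg_left h1' hσ.le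
        nlinarith
      have h2 : Real.exp (-(σ * x ^ (k+1))) ≤ Real.exp (-σ) * Real.exp (-(σ * x ^ k)) := by
        rw [← Real.exp_add]
        apply Real.exp_le_exp.mpr
        linarith
      have h3 : Real.exp (-(σ * x ^ k)) ≤ (n.factorial : ℝ) / (σ * x ^ k) ^ n :=
        exp_neg_le_fac_div (by positivity) n
      calc x ^ (n*(k+1)) * Real.exp (-(σ * x ^ (k+1)))
          ≤ x ^ (n*(k+1)) * (Real.exp (-σ) * ((n.factorial : ℝ) / (σ * x ^ k) ^ n)) := by
            apply mul_le_mul_of_nonneg_left _ (by positivity)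
            calc Real.exp (-(σ * x ^ (k+1)))
                ≤ Real.exp (-σ) * Real.exp (-(σ * x ^ k)) := h2
              _ ≤ Real.exp (-σ) * ((n.factorial : ℝ) / (σ * x ^ k) ^ n) :=
                  mul_le_mul_of_nonneg_left h3 (Real.exp_nonneg _)
        _ = Real.exp (-σ) * ((n.factorial : ℝ) * x ^ n / σ ^ n) := by
            rw [mul_pow, mul_add, mul_one, pow_add]
            field_simp
            ring
        _ ≤ Real.exp (-σ) * (1 + (n.factorial : ℝ) * x ^ n / σ ^ n) := by
            have h4 : (0:ℝ) ≤ Real.exp (-σ) := Real.exp_nonneg _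
            nlinarith

/-- If `J` is of exponential type with parameters `A, B, C₁ > 0` and `-n < γ < 0`, and the
identity of Lemma 1(ii) holds for its radial Fourier transform `Ĵ`, then there are constants
`B₁, B₂ > 0` with
`1 - Ĵ(‖ξ‖) ≤ B₁‖ξ‖^{-n-γ} e^{-C₁ p ‖ξ‖⁻¹} + B₂‖ξ‖^{-γ} e^{-C₁ p ‖ξ‖⁻¹}` for all `ξ ≠ 0`
(the radius `‖ξ‖` ranging over the powers `p^m`, `m ∈ ℤ`). -/
theorem stmt7 (p n : ℕ) [Fact p.Prime] (hn : 0 < n)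
    (γ A B C1 : ℝ) (hA : 0 < A) (hB : 0 < B) (hC1 : 0 < C1)
    (hγ1 : -(n : ℝ) < γ) (hγ2 : γ < 0)
    (Jr Jhat : ℝ → ℝ)
    (hexp : ∀ m : ℤ,
      A * ((p : ℝ) ^ m) ^ γ * Real.exp (-C1 * (p : ℝ) ^ m) ≤ Jr ((p : ℝ) ^ m) ∧
      Jr ((p : ℝ) ^ m) ≤ B * ((p : ℝ) ^ m) ^ γ * Real.exp (-C1 * (p : ℝ) ^ m))
    (hid : ∀ m : ℤ,
      1 - Jhat ((p : ℝ) ^ m) =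
        ((p : ℝ) ^ m) ^ (-(n : ℤ)) * Jr (p * ((p : ℝ) ^ m)⁻¹) +
          (p : ℝ) ^ (n : ℤ) * ((p : ℝ) ^ m) ^ (-(n : ℤ)) *
            ∑' l : ℕ, (p : ℝ) ^ (n * l) * Jr ((p : ℝ) ^ (1 + l) * ((p : ℝ) ^ m)⁻¹)) :
    ∃ B1 B2 : ℝ, 0 < B1 ∧ 0 < B2 ∧ ∀ m : ℤ,
      1 - Jhat ((p : ℝ) ^ m) ≤
        B1 * ((p : ℝ) ^ m) ^ (-(n : ℝ) - γ) * Real.exp (-C1 * p * ((p : ℝ) ^ m)⁻¹) +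
          B2 * ((p : ℝ) ^ m) ^ (-γ) * Real.exp (-C1 * p * ((p : ℝ) ^ m)⁻¹) := by
  have hpp : p.Prime := Fact.out
  have hp2 : (2:ℝ) ≤ (p:ℝ) := by exact_mod_cast hpp.two_le
  have hx0 : (0:ℝ) < (p:ℝ) := by linarith
  have hx1 : (1:ℝ) < (p:ℝ) := by linarith
  have hxne : ((p:ℝ)) ≠ 0 := ne_of_gt hx0
  have hq0 : 0 < (p:ℝ) ^ γ := Real.rpow_pos_of_pos hx0 γ
  have hq1 : (p:ℝ) ^ γ < 1 := Real.rpow_lt_one_of_one_lt_of_neg hx1 hγ2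
  have h1q : 0 < 1 - (p:ℝ) ^ γ := by linarith
  have hpn : (0:ℝ) < (p:ℝ) ^ n := pow_pos hx0 n
  have hfac : (0:ℝ) < (n.factorial : ℝ) := by positivity
  have hC1n : (0:ℝ) < C1 ^ n := pow_pos hC1 n
  refine ⟨B * (p:ℝ) ^ γ * (1 + (p:ℝ) ^ n / (1 - (p:ℝ) ^ γ)),
    B * (n.factorial : ℝ) * (p:ℝ) ^ n * (p:ℝ) ^ γ / (C1 ^ n * (1 - (p:ℝ) ^ γ)),
    mul_pos (mul_pos hB hq0) (add_pos one_pos (div_pos hpn h1q)),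
    div_pos (by positivity) (mul_pos hC1n h1q), fun m => ?_⟩
  -- conversions to rpow
  have hzz : ∀ k : ℤ, ((p:ℝ) ^ k : ℝ) = (p:ℝ) ^ ((k:ℤ) : ℝ) := fun k =>
    (Real.rpow_intCast _ k).symm
  have hupos : ∀ a : ℝ, 0 < (p:ℝ) ^ (a:ℝ) := fun a => Real.rpow_pos_of_pos hx0 a
  have hzpos : ∀ k : ℤ, 0 < ((p:ℝ) ^ k : ℝ) := fun k => zpow_pos hx0 k
  -- rewrite the arguments
  have hinv : (p:ℝ) * ((p:ℝ) ^ m)⁻¹ = (p:ℝ) ^ ((1:ℤ) - m) := by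
    rw [zpow_sub₀ hxne, zpow_one, div_eq_mul_inv]
  have hinvl : ∀ l : ℕ, (p:ℝ) ^ (1 + l) * ((p:ℝ) ^ m)⁻¹ = (p:ℝ) ^ ((1:ℤ) + l - m) := by
    intro l
    rw [zpow_sub₀ hxne, div_eq_mul_inv]
    congr 1
    all_goals
      rw [← zpow_natCast (p:ℝ) (1 + l)]
      norm_cast
  -- abbreviations (as plain expressions)
  have hP0 : 0 < ((p:ℝ) ^ ((1:ℤ) - m) : ℝ) ^ γ :=
    Real.rpow_pos_of_pos (hzpos _) γ
  have hσ0 : 0 < C1 * (p:ℝ) ^ ((1:ℤ) - m) := mul_pos hC1 (hzpos _)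
  have hE0 : 0 < Real.exp (-C1 * (p:ℝ) ^ ((1:ℤ) - m)) := Real.exp_pos _
  have hD0 : 0 < 1 + (n.factorial : ℝ) * (p:ℝ) ^ n / (C1 * (p:ℝ) ^ ((1:ℤ) - m)) ^ n :=
    add_pos one_pos (div_pos (mul_pos hfac hpn) (pow_pos hσ0 n))
  -- termwise bound for the series
  have hgF : ∀ l : ℕ, (p:ℝ) ^ (n * l) * Jr ((p:ℝ) ^ ((1:ℤ) + l - m)) ≤
      (B * ((p:ℝ) ^ ((1:ℤ) - m) : ℝ) ^ γ * Real.exp (-C1 * (p:ℝ) ^ ((1:ℤ) - m)) *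
        (1 + (n.factorial : ℝ) * (p:ℝ) ^ n / (C1 * (p:ℝ) ^ ((1:ℤ) - m)) ^ n)) *
        ((p:ℝ) ^ γ) ^ l := by
    intro l
    have hsplit : (p:ℝ) ^ ((1:ℤ) + l - m) = (p:ℝ) ^ ((1:ℤ) - m) * (p:ℝ) ^ (l:ℕ) := by
      rw [← zpow_natCast (p:ℝ) l, ← zpow_add₀ hxne]
      congr 1
      ring
    have hJ := (hexp ((1:ℤ) + l - m)).2
    have hrp : (((p:ℝ) ^ ((1:ℤ) - m) * (p:ℝ) ^ (l:ℕ)) : ℝ) ^ γ =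
        ((p:ℝ) ^ ((1:ℤ) - m) : ℝ) ^ γ * ((p:ℝ) ^ γ) ^ l := by
      rw [Real.mul_rpow (hzpos _).le (by positivity)]
      congr 1
      rw [← Real.rpow_natCast (p:ℝ) l, ← Real.rpow_mul hx0.le, mul_comm (l:ℝ) γ,
        Real.rpow_mul hx0.le, Real.rpow_natCast]
    have hexpeq : Real.exp (-C1 * ((p:ℝ) ^ ((1:ℤ) - m) * (p:ℝ) ^ (l:ℕ))) =
        Real.exp (-(C1 * (p:ℝ) ^ ((1:ℤ) - m) * (p:ℝ) ^ l)) := by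
      congr 1
      ring
    rw [hsplit] at hJ ⊢
    rw [hrp, hexpeq] at hJ
    calc (p:ℝ) ^ (n * l) * Jr ((p:ℝ) ^ ((1:ℤ) - m) * (p:ℝ) ^ (l:ℕ))
        ≤ (p:ℝ) ^ (n * l) * (B * (((p:ℝ) ^ ((1:ℤ) - m) : ℝ) ^ γ * ((p:ℝ) ^ γ) ^ l) *
            Real.exp (-(C1 * (p:ℝ) ^ ((1:ℤ) - m) * (p:ℝ) ^ l))) :=
          mul_le_mul_of_nonneg_left hJ (by positivity)
      _ = (B * ((p:ℝ) ^ ((1:ℤ) - m) : ℝ) ^ γ * ((p:ℝ) ^ γ) ^ l) *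
            ((p:ℝ) ^ (n * l) * Real.exp (-(C1 * (p:ℝ) ^ ((1:ℤ) - m) * (p:ℝ) ^ l))) := by
          ring
      _ ≤ (B * ((p:ℝ) ^ ((1:ℤ) - m) : ℝ) ^ γ * ((p:ℝ) ^ γ) ^ l) *
            (Real.exp (-(C1 * (p:ℝ) ^ ((1:ℤ) - m))) *
              (1 + (n.factorial : ℝ) * (p:ℝ) ^ n / (C1 * (p:ℝ) ^ ((1:ℤ) - m)) ^ n)) := by
          apply mul_le_mul_of_nonneg_left (key_bound n hp2 hσ0 l)
          have := pow_nonneg hq0.le l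
          positivity
      _ = (B * ((p:ℝ) ^ ((1:ℤ) - m) : ℝ) ^ γ * Real.exp (-C1 * (p:ℝ) ^ ((1:ℤ) - m)) *
            (1 + (n.factorial : ℝ) * (p:ℝ) ^ n / (C1 * (p:ℝ) ^ ((1:ℤ) - m)) ^ n)) *
            ((p:ℝ) ^ γ) ^ l := by
          rw [neg_mul]
          ring
  have hg0 : ∀ l : ℕ, 0 ≤ (p:ℝ) ^ (n * l) * Jr ((p:ℝ) ^ ((1:ℤ) + l - m)) := by
    intro l
    apply mul_nonneg (by positivity)
    have h1 := (hexp ((1:ℤ) + l - m)).1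
    have hpos : 0 < A * ((p:ℝ) ^ ((1:ℤ) + l - m) : ℝ) ^ γ *
        Real.exp (-C1 * (p:ℝ) ^ ((1:ℤ) + l - m)) :=
      mul_pos (mul_pos hA (Real.rpow_pos_of_pos (hzpos _) γ)) (Real.exp_pos _)
    linarith
  have hFs : Summable (fun l : ℕ =>
      (B * ((p:ℝ) ^ ((1:ℤ) - m) : ℝ) ^ γ * Real.exp (-C1 * (p:ℝ) ^ ((1:ℤ) - m)) *
        (1 + (n.factorial : ℝ) * (p:ℝ) ^ n / (C1 * (p:ℝ) ^ ((1:ℤ) - m)) ^ n)) *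
        ((p:ℝ) ^ γ) ^ l) :=
    (summable_geometric_of_lt_one hq0.le hq1).mul_left _
  have hgs : Summable (fun l : ℕ => (p:ℝ) ^ (n * l) * Jr ((p:ℝ) ^ ((1:ℤ) + l - m))) :=
    Summable.of_nonneg_of_le hg0 hgF hFs
  have htsum : (∑' l : ℕ, (p:ℝ) ^ (n * l) * Jr ((p:ℝ) ^ ((1:ℤ) + l - m))) ≤
      (B * ((p:ℝ) ^ ((1:ℤ) - m) : ℝ) ^ γ * Real.exp (-C1 * (p:ℝ) ^ ((1:ℤ) - m)) *
        (1 + (n.factorial : ℝ) * (p:ℝ) ^ n / (C1 * (p:ℝ) ^ ((1:ℤ) - m)) ^ n)) *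
        (1 - (p:ℝ) ^ γ)⁻¹ := by
    calc (∑' l : ℕ, (p:ℝ) ^ (n * l) * Jr ((p:ℝ) ^ ((1:ℤ) + l - m)))
        ≤ ∑' l : ℕ, (B * ((p:ℝ) ^ ((1:ℤ) - m) : ℝ) ^ γ *
            Real.exp (-C1 * (p:ℝ) ^ ((1:ℤ) - m)) *
            (1 + (n.factorial : ℝ) * (p:ℝ) ^ n / (C1 * (p:ℝ) ^ ((1:ℤ) - m)) ^ n)) *
            ((p:ℝ) ^ γ) ^ l := Summable.tsum_le_tsum hgF hgs hFs
      _ = _ := by rw [tsum_mul_left, tsum_geometric_of_lt_one hq0.le hq1]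
  -- assemble the main estimate
  rw [hid m, hinv]
  have hrw : (∑' l : ℕ, (p:ℝ) ^ (n * l) * Jr ((p:ℝ) ^ (1 + l) * ((p:ℝ) ^ m)⁻¹)) =
      ∑' l : ℕ, (p:ℝ) ^ (n * l) * Jr ((p:ℝ) ^ ((1:ℤ) + l - m)) := by
    congr 1
    funext l
    rw [hinvl l]
  rw [hrw]
  have hJ1 := (hexp (1 - m)).2
  have hz1 : (0:ℝ) < ((p:ℝ) ^ m : ℝ) ^ (-(n:ℤ)) := zpow_pos (hzpos m) _
  have hz2 : (0:ℝ) < ((p:ℝ) ^ ((n:ℕ):ℤ) : ℝ) := hzpos _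
  have main : ((p:ℝ) ^ m : ℝ) ^ (-(n:ℤ)) * Jr ((p:ℝ) ^ ((1:ℤ) - m)) +
      (p:ℝ) ^ ((n:ℕ):ℤ) * ((p:ℝ) ^ m : ℝ) ^ (-(n:ℤ)) *
        (∑' l : ℕ, (p:ℝ) ^ (n * l) * Jr ((p:ℝ) ^ ((1:ℤ) + l - m))) ≤
      ((p:ℝ) ^ m : ℝ) ^ (-(n:ℤ)) *
        (B * ((p:ℝ) ^ ((1:ℤ) - m) : ℝ) ^ γ * Real.exp (-C1 * (p:ℝ) ^ ((1:ℤ) - m))) +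
      (p:ℝ) ^ ((n:ℕ):ℤ) * ((p:ℝ) ^ m : ℝ) ^ (-(n:ℤ)) *
        ((B * ((p:ℝ) ^ ((1:ℤ) - m) : ℝ) ^ γ * Real.exp (-C1 * (p:ℝ) ^ ((1:ℤ) - m)) *
          (1 + (n.factorial : ℝ) * (p:ℝ) ^ n / (C1 * (p:ℝ) ^ ((1:ℤ) - m)) ^ n)) *
          (1 - (p:ℝ) ^ γ)⁻¹) := by
    apply add_le_add
    · exact mul_le_mul_of_nonneg_left hJ1 hz1.le
    · exact mul_le_mul_of_nonneg_left htsum (mul_pos hz2 hz1).le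
  refine le_trans main ?_
  -- final algebraic identity: everything to rpow
  have hrw1 : ((p:ℝ) ^ m : ℝ) ^ (-(n:ℤ)) = (p:ℝ) ^ ((m:ℝ) * (-(n:ℝ))) := by
    rw [hzz m, ← Real.rpow_intCast ((p:ℝ) ^ ((m:ℤ):ℝ)) (-(n:ℤ)), ← Real.rpow_mul hx0.le]
    congr 1
    push_cast
    ring
  have hrw2 : ((p:ℝ) ^ ((1:ℤ) - m) : ℝ) ^ γ = (p:ℝ) ^ ((1 - (m:ℝ)) * γ) := by
    rw [hzz, ← Real.rpow_mul hx0.le]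
    congr 1
    push_cast
    ring
  have hrw3 : ((p:ℝ) ^ ((n:ℕ):ℤ) : ℝ) = (p:ℝ) ^ ((n:ℝ)) := by
    rw [hzz]
    norm_cast
  have hrw4 : ((p:ℝ) ^ ((1:ℤ) - m) : ℝ) ^ (n:ℕ) = (p:ℝ) ^ ((1 - (m:ℝ)) * (n:ℝ)) := by
    rw [hzz, ← Real.rpow_natCast ((p:ℝ) ^ ((((1:ℤ) - m):ℤ):ℝ)) n, ← Real.rpow_mul hx0.le]
    congr 1
    push_cast
    ring
  have hrw5 : ((p:ℝ) ^ m : ℝ) ^ (-(n:ℝ) - γ) = (p:ℝ) ^ ((m:ℝ) * (-(n:ℝ) - γ)) := by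
    rw [hzz m, ← Real.rpow_mul hx0.le]
  have hrw6 : ((p:ℝ) ^ m : ℝ) ^ (-γ) = (p:ℝ) ^ ((m:ℝ) * (-γ)) := by
    rw [hzz m, ← Real.rpow_mul hx0.le]
  have hrw7 : -C1 * (p:ℝ) * ((p:ℝ) ^ m)⁻¹ = -C1 * (p:ℝ) ^ ((1:ℤ) - m) := by
    rw [mul_assoc, hinv]
  have hrw8 : ((p:ℝ) ^ n : ℝ) = (p:ℝ) ^ ((n:ℝ)) := (Real.rpow_natCast _ n).symm
  have hrw0 : (C1 * (p:ℝ) ^ ((1:ℤ) - m)) ^ n = C1 ^ n * ((p:ℝ) ^ ((1:ℤ) - m) : ℝ) ^ (n:ℕ) :=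
    mul_pow C1 _ n
  rw [hrw0, hrw1, hrw2, hrw3, hrw4, hrw5, hrw6, hrw7, hrw8]
  -- key rpow product identities
  have K2 : (p:ℝ) ^ ((1 - (m:ℝ)) * (n:ℝ)) = (p:ℝ) ^ ((n:ℝ)) * (p:ℝ) ^ ((m:ℝ) * (-(n:ℝ))) := by
    rw [← Real.rpow_add hx0]
    congr 1
    ring
  have K3 : (p:ℝ) ^ ((1 - (m:ℝ)) * γ) = (p:ℝ) ^ γ * (p:ℝ) ^ ((m:ℝ) * (-γ)) := by
    rw [← Real.rpow_add hx0]
    congr 1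
    ring
  have K5 : (p:ℝ) ^ ((m:ℝ) * (-(n:ℝ) - γ)) =
      (p:ℝ) ^ ((m:ℝ) * (-(n:ℝ))) * (p:ℝ) ^ ((m:ℝ) * (-γ)) := by
    rw [← Real.rpow_add hx0]
    congr 1
    ring
  rw [K2, K3, K5]
  have ha0 : (0:ℝ) < (p:ℝ) ^ ((m:ℝ) * (-(n:ℝ))) := hupos _
  have hb0 : (0:ℝ) < (p:ℝ) ^ ((m:ℝ) * (-γ)) := hupos _
  have hc0 : (0:ℝ) < (p:ℝ) ^ ((n:ℝ)) := hupos _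
  have hEp : (0:ℝ) < Real.exp (-C1 * (p:ℝ) ^ ((1:ℤ) - m)) := Real.exp_pos _
  apply le_of_eq
  field_simp [h1q.ne', hC1n.ne', ha0.ne', hb0.ne', hc0.ne', hEp.ne']
  ring
end

section
/- Define Z̃(x,t) = ‖x‖_p^{-n} [ (1-p^{-n}) ∑_{j=0}^∞ p^{-nj} e^{(Ĵ(p^{-j}‖x‖_p^{-1}) - 1) t} - e^{(Ĵ(p‖x‖_p^{-1}) - 1) t} ] for x ≠ 0 and t > 0, where Ĵ : {powers of p} → ℝ satisfies Ĵ ≤ 1 and Ĵ(p‖x‖_p^{-1}) ≤ 1. Then Z̃(x,t) ≤ t ‖x‖_p^{-n} (1 - Ĵ(p‖x‖_p^{-1})), and consequently Z̃(x,t) ≤ 2 t ‖x‖_p^{-n}. -/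
/-- For `Z̃(r,t) = r^{-n}[(1-p^{-n}) ∑_{j≥0} p^{-nj} e^{(Ĵ(p^{-j} r⁻¹)-1)t} - e^{(Ĵ(p r⁻¹)-1)t}]`
with `Ĵ ≤ 1` (values in `[-1,1]`), one has `Z̃(r,t) ≤ t r^{-n}(1 - Ĵ(p r⁻¹))` and hence
`Z̃(r,t) ≤ 2 t r^{-n}`, where `r = ‖x‖_p > 0` and `t > 0`. -/
theorem stmt12 (p n : ℕ) [Fact p.Prime] (hn : 0 < n)
    (Jhat : ℝ → ℝ) (hub : ∀ s, Jhat s ≤ 1) (hlb : ∀ s, -1 ≤ Jhat s)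
    (r t : ℝ) (hr : 0 < r) (ht : 0 < t) :
    r ^ (-(n : ℤ)) *
        ((1 - (p : ℝ) ^ (-(n : ℤ))) *
            (∑' j : ℕ, (p : ℝ) ^ (-((n * j : ℕ) : ℤ)) *
              Real.exp ((Jhat ((p : ℝ) ^ (-(j : ℤ)) * r⁻¹) - 1) * t)) -
          Real.exp ((Jhat (p * r⁻¹) - 1) * t)) ≤
      t * r ^ (-(n : ℤ)) * (1 - Jhat (p * r⁻¹)) ∧
    r ^ (-(n : ℤ)) *
        ((1 - (p : ℝ) ^ (-(n : ℤ))) *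
            (∑' j : ℕ, (p : ℝ) ^ (-((n * j : ℕ) : ℤ)) *
              Real.exp ((Jhat ((p : ℝ) ^ (-(j : ℤ)) * r⁻¹) - 1) * t)) -
          Real.exp ((Jhat (p * r⁻¹) - 1) * t)) ≤
      2 * t * r ^ (-(n : ℤ)) := by
  have hp : 2 ≤ (p : ℝ) := by exact_mod_cast (Fact.out : p.Prime).two_le
  have hp1 : 1 < (p : ℝ) := by linarith
  set q : ℝ := (p : ℝ) ^ (-(n : ℤ)) with hq
  have hq0 : 0 < q := zpow_pos (by linarith) _
  have hq1 : q < 1 := by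
    have h1 : (1:ℝ) < (p:ℝ) ^ (n:ℤ) := by rw [zpow_natCast]; exact one_lt_pow₀ hp1 hn.ne'
    rw [hq, zpow_neg]
    exact inv_lt_one_of_one_lt₀ h1
  have hterm : ∀ j : ℕ, (p : ℝ) ^ (-((n * j : ℕ) : ℤ)) = q ^ j := by
    intro j
    rw [hq, ← zpow_natCast ((p : ℝ) ^ (-(n : ℤ))) j, ← zpow_mul]
    push_cast
    ring_nf
  have hexp1 : ∀ s : ℝ, Real.exp ((Jhat s - 1) * t) ≤ 1 := by
    intro s
    rw [Real.exp_le_one_iff]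
    have := hub s
    nlinarith
  have hsum : Summable (fun j : ℕ => (p : ℝ) ^ (-((n * j : ℕ) : ℤ)) *
      Real.exp ((Jhat ((p : ℝ) ^ (-(j : ℤ)) * r⁻¹) - 1) * t)) := by
    refine Summable.of_nonneg_of_le (fun j => by positivity) (fun j => ?_)
      (summable_geometric_of_lt_one hq0.le hq1)
    rw [hterm j]
    calc q ^ j * Real.exp _ ≤ q ^ j * 1 :=
          mul_le_mul_of_nonneg_left (hexp1 _) (by positivity)
      _ = q ^ j := mul_one _
  have hS : (∑' j : ℕ, (p : ℝ) ^ (-((n * j : ℕ) : ℤ)) *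
      Real.exp ((Jhat ((p : ℝ) ^ (-(j : ℤ)) * r⁻¹) - 1) * t)) ≤ (1 - q)⁻¹ := by
    have := Summable.tsum_le_tsum (f := fun j : ℕ => (p : ℝ) ^ (-((n * j : ℕ) : ℤ)) *
        Real.exp ((Jhat ((p : ℝ) ^ (-(j : ℤ)) * r⁻¹) - 1) * t))
      (g := fun j : ℕ => q ^ j)
      (fun j => by
        rw [hterm j]
        calc q ^ j * Real.exp _ ≤ q ^ j * 1 :=
              mul_le_mul_of_nonneg_left (hexp1 _) (by positivity)
          _ = q ^ j := mul_one _)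
      hsum (summable_geometric_of_lt_one hq0.le hq1)
    rwa [tsum_geometric_of_lt_one hq0.le hq1] at this
  have h1q : 0 < 1 - q := by linarith
  have hfirst : (1 - q) *
      (∑' j : ℕ, (p : ℝ) ^ (-((n * j : ℕ) : ℤ)) *
        Real.exp ((Jhat ((p : ℝ) ^ (-(j : ℤ)) * r⁻¹) - 1) * t)) ≤ 1 := by
    have := mul_le_mul_of_nonneg_left hS h1q.le
    rwa [mul_inv_cancel₀ (ne_of_gt h1q)] at this
  -- 1 - exp((a-1)t) ≤ (1-a)t
  have hexp_lb : (Jhat (p * r⁻¹) - 1) * t + 1 ≤ Real.exp ((Jhat (p * r⁻¹) - 1) * t) :=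
    Real.add_one_le_exp _
  have hrn : 0 < r ^ (-(n : ℤ)) := zpow_pos hr _
  have hmain : r ^ (-(n : ℤ)) *
      ((1 - q) * (∑' j : ℕ, (p : ℝ) ^ (-((n * j : ℕ) : ℤ)) *
          Real.exp ((Jhat ((p : ℝ) ^ (-(j : ℤ)) * r⁻¹) - 1) * t)) -
        Real.exp ((Jhat (p * r⁻¹) - 1) * t)) ≤
      t * r ^ (-(n : ℤ)) * (1 - Jhat (p * r⁻¹)) := by
    have hb : (1 - q) * (∑' j : ℕ, (p : ℝ) ^ (-((n * j : ℕ) : ℤ)) *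
          Real.exp ((Jhat ((p : ℝ) ^ (-(j : ℤ)) * r⁻¹) - 1) * t)) -
        Real.exp ((Jhat (p * r⁻¹) - 1) * t) ≤ t * (1 - Jhat (p * r⁻¹)) := by
      nlinarith
    calc _ ≤ r ^ (-(n : ℤ)) * (t * (1 - Jhat (p * r⁻¹))) :=
          mul_le_mul_of_nonneg_left hb hrn.le
      _ = t * r ^ (-(n : ℤ)) * (1 - Jhat (p * r⁻¹)) := by ring
  refine ⟨hmain, hmain.trans ?_⟩
  have h2 : 1 - Jhat (p * r⁻¹) ≤ 2 := by have := hlb (p * r⁻¹); linarith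
  calc t * r ^ (-(n : ℤ)) * (1 - Jhat (p * r⁻¹)) ≤ t * r ^ (-(n : ℤ)) * 2 :=
        mul_le_mul_of_nonneg_left h2 (by positivity)
    _ = 2 * t * r ^ (-(n : ℤ)) := by ring
end

section
/- Let h : {p^j : j ∈ ℤ} → ℂ be locally integrable as a radial function on Q_p^n and suppose ∑_{k=0}^∞ p^{-kn} |h(p^{-k} ‖x‖_p^{-1})| < ∞ for x ≠ 0. Then the (improper) radial inverse Fourier transform h̃(x) := ∑_{j∈ℤ} h(p^j) ∫_{‖ξ‖_p = p^j} χ_p(-x·ξ) d^n ξ converges for x ≠ 0 and equals (1-p^{-n}) ‖x‖_p^{-n} ∑_{k=0}^∞ p^{-kn} h(p^{-k}‖x‖_p^{-1}) - ‖x‖_p^{-n} h(p‖x‖_p^{-1}). -/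
/-!
Split the sphere `‖ξ‖ = p^j` as the ball of radius `p^j` minus the ball of radius `p^(j-1)`.
On a ball `B` of radius `p^j` the character `ξ ↦ χ(-x·ξ)` is identically `1` when
`‖x‖ ≤ p^(-j)`, so its integral is `vol B = p^(nj)`, because `B` is tiled by `p^n` translates of
the next smaller ball. When `‖x‖ > p^(-j)` some translation preserving `B` multiplies the character
by a constant `≠ 1`, so the integral vanishes. Hence only the spheres with `j ≤ 1 - m` contribute,
and the sum over `j` becomes the stated series in `k = -j - m ≥ 0` plus the single term `j = 1 - m`.
-/

open MeasureTheory Metric Function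
open scoped ENNReal

lemma hasSum_int_of_eq_zero_of_lt {M : Type*} [AddCommMonoid M] [TopologicalSpace M]
    [ContinuousAdd M] {F : ℤ → M} {a : ℤ} {s : M} (hzero : ∀ j, a < j → F j = 0)
    (htail : HasSum (fun k : ℕ => F (a - (k + 1 : ℕ))) s) : HasSum F (F a + s) := by
  have hinj : Injective fun k : ℕ => a - k := fun k l hkl => by simpa using hkl
  rw [← hinj.hasSum_iff fun j hj => hzero j ?_]
  · simpa using HasSum.zero_add (f := F ∘ fun k : ℕ => a - k) htail
  · by_contra! hle
    exact hj ⟨(a - j).toNat, by simp only; omega⟩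

lemma integral_eq_zero_of_add_left_eq_mul {G : Type*} [AddGroup G] [MeasurableSpace G]
    [MeasurableAdd G] {μ : Measure G} [μ.IsAddLeftInvariant] {f : G → ℂ} {v : G} {c : ℂ}
    (hc : c ≠ 1) (hf : ∀ ξ, f (v + ξ) = c * f ξ) : ∫ ξ, f ξ ∂μ = 0 := by
  have h := integral_add_left_eq_self (μ := μ) f v
  simp_rw [hf, integral_const_mul] at h
  have h' : (c - 1) * ∫ ξ, f ξ ∂μ = 0 := by rw [sub_mul, one_mul, h, sub_self]
  exact (mul_eq_zero.mp h').resolve_left (sub_ne_zero.mpr hc)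

namespace Padic

variable {p : ℕ} [hp : Fact p.Prime] {n : ℕ}

lemma natCast_eq_of_norm_sub_lt_one {a b : ℕ} (ha : a < p) (hb : b < p)
    (h : ‖(a : ℚ_[p]) - b‖ < 1) : a = b := by
  have hdvd : (p : ℤ) ∣ (a : ℤ) - b := by
    rw [← norm_intCast_lt_one_iff]; push_cast; exact h
  exact ((Nat.modEq_iff_dvd.mpr hdvd).eq_of_lt_of_lt hb ha).symm

lemma norm_mul_p_zpow (y : ℚ_[p]) (k : ℤ) : ‖y * (p : ℚ_[p]) ^ k‖ = ‖y‖ * (p : ℝ) ^ (-k) := by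
  rw [norm_mul, norm_p_zpow]

lemma exists_lt_norm_sub_natCast_mul_zpow_le {j : ℤ} {y : ℚ_[p]} (hy : ‖y‖ ≤ (p : ℝ) ^ (j + 1)) :
    ∃ c < p, ‖y - c * (p : ℚ_[p]) ^ (-(j + 1))‖ ≤ (p : ℝ) ^ j := by
  have hp0 : (p : ℝ) ≠ 0 := by exact_mod_cast hp.out.ne_zero
  have hz : ‖y * (p : ℚ_[p]) ^ (j + 1)‖ ≤ 1 := by
    rw [norm_mul_p_zpow]
    calc ‖y‖ * (p : ℝ) ^ (-(j + 1)) ≤ (p : ℝ) ^ (j + 1) * (p : ℝ) ^ (-(j + 1)) := by gcongr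
      _ = 1 := by rw [← zpow_add₀ hp0, add_neg_cancel, zpow_zero]
  obtain ⟨c, hc, hmem⟩ := PadicInt.exists_mem_range ⟨_, hz⟩
  refine ⟨c, hc, ?_⟩
  have hdigit : ‖y * (p : ℚ_[p]) ^ (j + 1) - c‖ ≤ (p : ℝ) ^ (-1 : ℤ) := by
    rw [norm_le_pow_iff_norm_lt_pow_add_one, neg_add_cancel, zpow_zero]
    exact PadicInt.mem_nonunits.mp ((IsLocalRing.mem_maximalIdeal _).mp hmem)
  have hsplit : y - c * (p : ℚ_[p]) ^ (-(j + 1)) =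
      (y * (p : ℚ_[p]) ^ (j + 1) - c) * (p : ℚ_[p]) ^ (-(j + 1)) := by
    rw [sub_mul, mul_assoc, ← zpow_add₀ (by exact_mod_cast hp.out.ne_zero), add_neg_cancel,
      zpow_zero, mul_one]
  rw [hsplit, norm_mul_p_zpow, neg_neg]
  calc _ ≤ (p : ℝ) ^ (-1 : ℤ) * (p : ℝ) ^ (j + 1) := by gcongr
    _ = (p : ℝ) ^ j := by rw [← zpow_add₀ hp0]; ring_nf

/-- The `p ^ n` points `c * p^(-(j+1))`, `c i < p`, are the centres of a tiling of the ball of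
radius `p^(j+1)` by balls of radius `p^j`. -/
noncomputable def digitCenter (j : ℤ) (c : Fin n → Fin p) : Fin n → ℚ_[p] :=
  fun i => (c i : ℕ) * (p : ℚ_[p]) ^ (-(j + 1))

lemma closedBall_zpow_succ_eq_iUnion (j : ℤ) :
    closedBall (0 : Fin n → ℚ_[p]) ((p : ℝ) ^ (j + 1)) =
      ⋃ c : Fin n → Fin p, closedBall (digitCenter j c) ((p : ℝ) ^ j) := by
  have hp0 : (0 : ℝ) < p := by exact_mod_cast hp.out.pos
  ext y
  simp only [Set.mem_iUnion, mem_closedBall, dist_eq_norm, sub_zero,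
    pi_norm_le_iff_of_nonneg (zpow_pos hp0 _).le]
  constructor
  · intro hy
    choose c hc hnear using fun i => exists_lt_norm_sub_natCast_mul_zpow_le (hy i)
    exact ⟨fun i => ⟨c i, hc i⟩, hnear⟩
  · rintro ⟨c, hc⟩ i
    have hcenter : ‖digitCenter j c i‖ ≤ (p : ℝ) ^ (j + 1) := by
      rw [digitCenter, norm_mul_p_zpow, neg_neg]
      exact mul_le_of_le_one_left (zpow_pos hp0 _).le (IsUltrametricDist.norm_natCast_le_one _ _)
    calc ‖y i‖ = ‖(y i - digitCenter j c i) + digitCenter j c i‖ := by rw [sub_add_cancel]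
      _ ≤ max ‖y i - digitCenter j c i‖ ‖digitCenter j c i‖ :=
        IsUltrametricDist.norm_add_le_max _ _
      _ ≤ (p : ℝ) ^ (j + 1) :=
        max_le ((hc i).trans (zpow_le_zpow_right₀ (by exact_mod_cast hp.out.one_le) (by omega)))
          hcenter

lemma pairwise_disjoint_closedBall_digitCenter (j : ℤ) :
    Pairwise (Disjoint on
      fun c : Fin n → Fin p => closedBall (digitCenter j c) ((p : ℝ) ^ j)) := by
  have hp0 : (0 : ℝ) < p := by exact_mod_cast hp.out.pos
  intro c c' hne
  refine (IsUltrametricDist.closedBall_eq_or_disjoint _ _ _).resolve_left fun heq => hne ?_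
  have hmem : digitCenter j c ∈ closedBall (digitCenter j c') ((p : ℝ) ^ j) :=
    heq ▸ mem_closedBall_self (zpow_pos hp0 _).le
  rw [mem_closedBall, dist_eq_norm, pi_norm_le_iff_of_nonneg (zpow_pos hp0 _).le] at hmem
  funext i
  refine Fin.ext (natCast_eq_of_norm_sub_lt_one (c i).isLt (c' i).isLt ?_)
  have hi : ‖((c i : ℕ) - (c' i : ℕ) : ℚ_[p])‖ * (p : ℝ) ^ (j + 1) < 1 * (p : ℝ) ^ (j + 1) := by
    rw [one_mul, ← neg_neg (j + 1), ← norm_mul_p_zpow, sub_mul]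
    exact (hmem i).trans_lt (zpow_lt_zpow_right₀ (by exact_mod_cast hp.out.one_lt) (by omega))
  exact lt_of_mul_lt_mul_right hi (zpow_pos hp0 _).le

lemma norm_le_zpow_sub_one_iff_lt (ξ : Fin n → ℚ_[p]) (j : ℤ) :
    ‖ξ‖ ≤ (p : ℝ) ^ (j - 1) ↔ ‖ξ‖ < (p : ℝ) ^ j := by
  have hp0 : (0 : ℝ) < p := by exact_mod_cast hp.out.pos
  rw [pi_norm_le_iff_of_nonneg (zpow_pos hp0 _).le, pi_norm_lt_iff (zpow_pos hp0 _)]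
  simp only [norm_le_pow_iff_norm_lt_pow_add_one, sub_add_cancel]

lemma setOf_norm_eq_zpow_eq_diff (j : ℤ) :
    {ξ : Fin n → ℚ_[p] | ‖ξ‖ = (p : ℝ) ^ j} =
      closedBall 0 ((p : ℝ) ^ j) \ closedBall 0 ((p : ℝ) ^ (j - 1)) := by
  ext ξ
  simp only [Set.mem_ofPred_eq, Set.mem_sdiff, mem_closedBall_zero_iff,
    norm_le_zpow_sub_one_iff_lt, le_antisymm_iff, not_lt]

section Haar

variable [MeasurableSpace (Fin n → ℚ_[p])] [BorelSpace (Fin n → ℚ_[p])]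
  (μ : Measure (Fin n → ℚ_[p]))

lemma addHaar_closedBall_zpow_succ [μ.IsAddHaarMeasure] (j : ℤ) :
    μ (closedBall 0 ((p : ℝ) ^ (j + 1))) = (p : ℝ≥0∞) ^ n * μ (closedBall 0 ((p : ℝ) ^ j)) := by
  rw [closedBall_zpow_succ_eq_iUnion, measure_iUnion (pairwise_disjoint_closedBall_digitCenter j)
    fun _ => measurableSet_closedBall]
  simp only [Measure.addHaar_closedBall_center, tsum_fintype, Finset.sum_const, Finset.card_univ,
    Fintype.card_fun, Fintype.card_fin, nsmul_eq_mul, Nat.cast_pow]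

lemma addHaar_real_closedBall_zpow [μ.IsAddHaarMeasure] (h₀ : μ (closedBall 0 1) = 1) (j : ℤ) :
    μ.real (closedBall 0 ((p : ℝ) ^ j)) = (p : ℝ) ^ (n * j) := by
  have hp0 : (p : ℝ) ≠ 0 := by exact_mod_cast hp.out.ne_zero
  have hstep : ∀ k : ℤ, μ.real (closedBall 0 ((p : ℝ) ^ (k + 1))) =
      (p : ℝ) ^ n * μ.real (closedBall 0 ((p : ℝ) ^ k)) := fun k => by
    simp [measureReal_def, addHaar_closedBall_zpow_succ, ENNReal.toReal_mul]
  induction j using Int.induction_on with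
  | zero => simp [measureReal_def, h₀]
  | succ k ih =>
    rw [hstep, ih, ← zpow_natCast, ← zpow_add₀ hp0]
    ring_nf
  | pred k ih =>
    rw [← mul_right_inj' (pow_ne_zero n hp0), ← hstep, sub_add_cancel, ih, ← zpow_natCast,
      ← zpow_add₀ hp0]
    ring_nf

variable (χ : AddChar ℚ_[p] ℂ) (x : Fin n → ℚ_[p])

lemma setIntegral_closedBall_addChar_of_norm_mul_le (hχ1 : ∀ y : ℚ_[p], ‖y‖ ≤ 1 → χ y = 1)
    {r : ℝ} (hr : ‖x‖ * r ≤ 1) :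
    ∫ ξ in closedBall 0 r, χ (-(∑ i, x i * ξ i)) ∂μ = μ.real (closedBall 0 r) := by
  have hone : Set.EqOn (fun ξ : Fin n → ℚ_[p] => χ (-(∑ i, x i * ξ i))) 1 (closedBall 0 r) :=
      fun ξ hξ => by
    refine hχ1 _ ?_
    rw [norm_neg]
    refine IsUltrametricDist.norm_sum_le_of_forall_le_of_nonneg zero_le_one fun i _ => ?_
    rw [norm_mul]
    exact (mul_le_mul (norm_le_pi_norm x i) ((norm_le_pi_norm ξ i).trans
      (mem_closedBall_zero_iff.mp hξ)) (norm_nonneg _) (norm_nonneg _)).trans hr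
  rw [setIntegral_congr_fun measurableSet_closedBall hone, Pi.one_def, setIntegral_const,
    Complex.real_smul, mul_one]

/-- Translating by `v = -(y / x i) • eᵢ`, which stays in the ball, multiplies the integrand by
`χ y ≠ 1`. -/
lemma setIntegral_closedBall_addChar_eq_zero [μ.IsAddHaarMeasure]
    (hχ2 : ∃ y : ℚ_[p], ‖y‖ = p ∧ χ y ≠ 1) {j : ℤ} (hx : (p : ℝ) ^ (-j) < ‖x‖) :
    ∫ ξ in closedBall 0 ((p : ℝ) ^ j), χ (-(∑ i, x i * ξ i)) ∂μ = 0 := by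
  have hp0 : (0 : ℝ) < p := by exact_mod_cast hp.out.pos
  obtain ⟨i, hi⟩ : ∃ i, (p : ℝ) ^ (-j) < ‖x i‖ := by
    by_contra! h
    exact hx.not_ge ((pi_norm_le_iff_of_nonneg (zpow_pos hp0 _).le).mpr h)
  have hxi : (p : ℝ) ^ (-j + 1) ≤ ‖x i‖ := by
    rw [← not_lt, ← norm_le_pow_iff_norm_lt_pow_add_one]
    exact hi.not_ge
  have hxi0 : x i ≠ 0 := norm_pos_iff.mp ((zpow_pos hp0 _).trans hi)
  obtain ⟨y, hy, hχy⟩ := hχ2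
  set v : Fin n → ℚ_[p] := Pi.single i (-(y / x i)) with hvdef
  have hv : v ∈ closedBall 0 ((p : ℝ) ^ j) := by
    rw [mem_closedBall_zero_iff, pi_norm_le_iff_of_nonneg (zpow_pos hp0 _).le]
    intro k
    rcases eq_or_ne k i with rfl | hk
    · rw [hvdef, Pi.single_eq_same, norm_neg, norm_div, hy,
        div_le_iff₀ ((zpow_pos hp0 _).trans hi)]
      calc (p : ℝ) = (p : ℝ) ^ j * (p : ℝ) ^ (-j + 1) := by
            rw [← zpow_add₀ hp0.ne', add_neg_cancel_left, zpow_one]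
        _ ≤ (p : ℝ) ^ j * ‖x k‖ := by gcongr
    · rw [hvdef, Pi.single_eq_of_ne hk, norm_zero]
      exact (zpow_pos hp0 _).le
  have hxv : ∑ k, x k * v k = -y := by
    simp [v, Pi.single_apply, mul_div_cancel₀ _ hxi0]
  have hmem : ∀ ξ, v + ξ ∈ closedBall 0 ((p : ℝ) ^ j) ↔ ξ ∈ closedBall 0 ((p : ℝ) ^ j) :=
    fun ξ =>
      (IsUltrametricDist.closedBall_openAddSubgroup _ (zpow_pos hp0 j)).add_mem_cancel_left hv
  rw [← integral_indicator measurableSet_closedBall]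
  refine integral_eq_zero_of_add_left_eq_mul (v := v) hχy fun ξ => ?_
  by_cases hξ : ξ ∈ closedBall 0 ((p : ℝ) ^ j)
  · simp only [Set.indicator_of_mem hξ, Set.indicator_of_mem ((hmem ξ).mpr hξ), Pi.add_apply,
      mul_add, Finset.sum_add_distrib, hxv, neg_add, neg_neg, AddChar.map_add_eq_mul]
  · simp only [Set.indicator_of_notMem hξ, Set.indicator_of_notMem (mt (hmem ξ).mp hξ), mul_zero]

lemma setIntegral_closedBall_addChar [μ.IsAddHaarMeasure] (h₀ : μ (closedBall 0 1) = 1)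
    (hχ1 : ∀ y : ℚ_[p], ‖y‖ ≤ 1 → χ y = 1) (hχ2 : ∃ y : ℚ_[p], ‖y‖ = p ∧ χ y ≠ 1) (j : ℤ) :
    ∫ ξ in closedBall 0 ((p : ℝ) ^ j), χ (-(∑ i, x i * ξ i)) ∂μ =
      if ‖x‖ ≤ (p : ℝ) ^ (-j) then (((p : ℝ) ^ (n * j) : ℝ) : ℂ) else 0 := by
  have hp0 : (0 : ℝ) < p := by exact_mod_cast hp.out.pos
  split_ifs with hx
  · have hr : ‖x‖ * (p : ℝ) ^ j ≤ 1 := by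
      calc ‖x‖ * (p : ℝ) ^ j ≤ (p : ℝ) ^ (-j) * (p : ℝ) ^ j := by gcongr
        _ = 1 := by rw [← zpow_add₀ hp0.ne', neg_add_cancel, zpow_zero]
    rw [setIntegral_closedBall_addChar_of_norm_mul_le μ χ x hχ1 hr,
      addHaar_real_closedBall_zpow μ h₀]
  · exact setIntegral_closedBall_addChar_eq_zero μ χ x hχ2 (not_le.mp hx)

lemma setIntegral_setOf_norm_eq_zpow_addChar [μ.IsAddHaarMeasure] (h₀ : μ (closedBall 0 1) = 1)
    (hχc : Continuous χ) (hχ1 : ∀ y : ℚ_[p], ‖y‖ ≤ 1 → χ y = 1)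
    (hχ2 : ∃ y : ℚ_[p], ‖y‖ = p ∧ χ y ≠ 1) {m : ℤ} (hm : ‖x‖ = (p : ℝ) ^ m) (j : ℤ) :
    ∫ ξ in {ξ | ‖ξ‖ = (p : ℝ) ^ j}, χ (-(∑ i, x i * ξ i)) ∂μ =
      if j ≤ -m then (((1 - (p : ℝ) ^ (-(n : ℤ))) * (p : ℝ) ^ (n * j) : ℝ) : ℂ)
      else if j = 1 - m then -(((p : ℝ) ^ (n * (j - 1)) : ℝ) : ℂ) else 0 := by
  have hp1 : (1 : ℝ) < p := by exact_mod_cast hp.out.one_lt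
  have hcont : Continuous fun ξ : Fin n → ℚ_[p] => χ (-(∑ i, x i * ξ i)) := by fun_prop
  rw [setOf_norm_eq_zpow_eq_diff, setIntegral_sdiff measurableSet_closedBall
      (hcont.continuousOn.integrableOn_compact (isCompact_closedBall _ _))
      (closedBall_subset_closedBall (zpow_le_zpow_right₀ hp1.le (by omega))),
    setIntegral_closedBall_addChar μ χ x h₀ hχ1 hχ2,
    setIntegral_closedBall_addChar μ χ x h₀ hχ1 hχ2]
  have hiff : ∀ k : ℤ, ‖x‖ ≤ (p : ℝ) ^ (-k) ↔ k ≤ -m := fun k => by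
    rw [hm, zpow_le_zpow_iff_right₀ hp1]; omega
  simp only [hiff]
  split_ifs <;> try omega
  · rw [← Complex.ofReal_sub, sub_mul, one_mul, ← zpow_add₀ (by positivity)]
    ring_nf
  · simp
  · simp

end Haar

end Padic

-- `h j` encodes the paper's `h(p^j)`; with `‖x‖ = p^m`, `h (-k - m)` is `h(p^(-k) ‖x‖⁻¹)`.
theorem stmt17_general (p n : ℕ) [Fact p.Prime]
    [MeasurableSpace (Fin n → ℚ_[p])] [BorelSpace (Fin n → ℚ_[p])]
    (μ : Measure (Fin n → ℚ_[p])) [μ.IsAddHaarMeasure]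
    (hμ : μ {x : Fin n → ℚ_[p] | ‖x‖ ≤ 1} = 1)
    (χ : AddChar ℚ_[p] ℂ) (hχc : Continuous χ)
    (hχ1 : ∀ y : ℚ_[p], ‖y‖ ≤ 1 → χ y = 1)
    (hχ2 : ∃ y : ℚ_[p], ‖y‖ = p ∧ χ y ≠ 1)
    (h : ℤ → ℂ)
    (x : Fin n → ℚ_[p]) (m : ℤ) (hm : ‖x‖ = (p : ℝ) ^ m)
    (hsum : Summable fun k : ℕ => (p : ℝ) ^ (-((n * k : ℕ) : ℤ)) * ‖h (-(k : ℤ) - m)‖) :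
    HasSum
      (fun j : ℤ =>
        h j * ∫ ξ in {ξ : Fin n → ℚ_[p] | ‖ξ‖ = (p : ℝ) ^ j}, χ (-(∑ i, x i * ξ i)) ∂μ)
      ((((1 - (p : ℝ) ^ (-(n : ℤ))) * ‖x‖ ^ (-(n : ℤ)) : ℝ) : ℂ) *
          (∑' k : ℕ, (((p : ℝ) ^ (-((n * k : ℕ) : ℤ)) : ℝ) : ℂ) * h (-(k : ℤ) - m)) -
        ((‖x‖ ^ (-(n : ℤ)) : ℝ) : ℂ) * h (1 - m)) := by
  have hp0 : (p : ℝ) ≠ 0 := by exact_mod_cast (Fact.out : p.Prime).ne_zero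
  have h₀ : μ (closedBall 0 1) = 1 := by
    rw [← hμ]; congr 1; ext; simp
  have hsphere := Padic.setIntegral_setOf_norm_eq_zpow_addChar μ χ x h₀ hχc hχ1 hχ2 hm
  set F : ℤ → ℂ := fun j =>
    h j * ∫ ξ in {ξ : Fin n → ℚ_[p] | ‖ξ‖ = (p : ℝ) ^ j}, χ (-(∑ i, x i * ξ i)) ∂μ
  set C : ℂ := (((1 - (p : ℝ) ^ (-(n : ℤ))) * ‖x‖ ^ (-(n : ℤ)) : ℝ) : ℂ)
  have hF0 : F (1 - m) = -((‖x‖ ^ (-(n : ℤ)) : ℝ) : ℂ) * h (1 - m) := by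
    simp only [F, hsphere, if_neg (show ¬ 1 - m ≤ -m by omega), if_true]
    rw [hm, ← zpow_mul, show (n : ℤ) * (1 - m - 1) = m * -n by ring]
    ring
  have hFtail : ∀ k : ℕ, F (1 - m - (k + 1 : ℕ)) =
      C * ((((p : ℝ) ^ (-((n * k : ℕ) : ℤ)) : ℝ) : ℂ) * h (-(k : ℤ) - m)) := fun k => by
    have hpow : (p : ℝ) ^ (n * (-k - m)) = ‖x‖ ^ (-(n : ℤ)) * (p : ℝ) ^ (-((n * k : ℕ) : ℤ)) := by
      rw [hm, ← zpow_mul, ← zpow_add₀ hp0]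
      push_cast
      ring_nf
    rw [show 1 - m - ((k + 1 : ℕ) : ℤ) = -k - m by push_cast; ring]
    simp only [F, hsphere, if_pos (show -(k : ℤ) - m ≤ -m by omega), hpow, C]
    push_cast
    ring
  have hFzero : ∀ j, 1 - m < j → F j = 0 := fun j hj => by
    simp only [F, hsphere, if_neg (show ¬ j ≤ -m by omega), if_neg (show j ≠ 1 - m by omega),
      mul_zero]
  have hg : Summable fun k : ℕ => (((p : ℝ) ^ (-((n * k : ℕ) : ℤ)) : ℝ) : ℂ) * h (-(k : ℤ) - m) :=
    Summable.of_norm <| hsum.congr fun k => by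
      rw [norm_mul, Complex.norm_real, Real.norm_of_nonneg (by positivity)]
  have hF := hasSum_int_of_eq_zero_of_lt hFzero (by simpa only [hFtail] using hg.hasSum.mul_left C)
  rwa [hF0, neg_mul, neg_add_eq_sub] at hF

/-- Let `h(p^j)` be a radial, locally integrable function on `ℚ_p^n` with
`∑_{k≥0} p^{-kn}|h(p^{-k}‖x‖_p⁻¹)| < ∞` for `x ≠ 0`. Then the improper radial inverse Fourier
transform `h̃(x) = ∑_{j∈ℤ} h(p^j) ∫_{‖ξ‖=p^j} χ_p(-x·ξ) d^nξ` converges and equals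
`(1-p^{-n})‖x‖_p^{-n} ∑_{k≥0} p^{-kn} h(p^{-k}‖x‖_p⁻¹) - ‖x‖_p^{-n} h(p‖x‖_p⁻¹)`.
Here `h : ℤ → ℂ` records the radial values `h j = h(p^j)` and `‖x‖_p = p^m`. -/
theorem stmt17 (p n : ℕ) [Fact p.Prime] (hn : 0 < n)
    [MeasurableSpace (Fin n → ℚ_[p])] [BorelSpace (Fin n → ℚ_[p])]
    (μ : Measure (Fin n → ℚ_[p])) [μ.IsAddHaarMeasure]
    (hμ : μ {x : Fin n → ℚ_[p] | ‖x‖ ≤ 1} = 1)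
    (χ : AddChar ℚ_[p] ℂ) (hχc : Continuous χ)
    (hχnorm : ∀ y : ℚ_[p], ‖χ y‖ = 1)
    (hχ1 : ∀ y : ℚ_[p], ‖y‖ ≤ 1 → χ y = 1)
    (hχ2 : ∃ y : ℚ_[p], ‖y‖ = p ∧ χ y ≠ 1)
    (h : ℤ → ℂ)
    (x : Fin n → ℚ_[p]) (hx : x ≠ 0) (m : ℤ) (hm : ‖x‖ = (p : ℝ) ^ m)
    (hsum : Summable fun k : ℕ => (p : ℝ) ^ (-((n * k : ℕ) : ℤ)) * ‖h (-(k : ℤ) - m)‖) :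
    HasSum
      (fun j : ℤ =>
        h j * ∫ ξ in {ξ : Fin n → ℚ_[p] | ‖ξ‖ = (p : ℝ) ^ j}, χ (-(∑ i, x i * ξ i)) ∂μ)
      ((((1 - (p : ℝ) ^ (-(n : ℤ))) * ‖x‖ ^ (-(n : ℤ)) : ℝ) : ℂ) *
          (∑' k : ℕ, (((p : ℝ) ^ (-((n * k : ℕ) : ℤ)) : ℝ) : ℂ) * h (-(k : ℤ) - m)) -
        ((‖x‖ ^ (-(n : ℤ)) : ℝ) : ℂ) * h (1 - m)) :=
  stmt17_general p n μ hμ χ hχc hχ1 hχ2 h x m hm hsum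
end
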